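/- For finite-horizon Markov Games with δ-continuous best-response at π^E: if the learned product policy π has time-uniform BC error ε_BC and every best response π*_i satisfies max_t E_{s∼μ^t_{π^E}}[‖π*_{i,t}(·|s) − π^E_{i,t}(·|s)‖₁] ≤ δ(ε_BC), then NashGap(π) ≤ (2n·ε_BC + δ(ε_BC))·H². -/

import Mathlib

open scoped BigOperators

namespace FH

/-- Finite-horizon `n`-player Markov Game with horizon `H` and time-dependent
rewards. -/
structure Game (n : ℕ) (S : Type) (A : Fin n → Type) [Fintype S] [∀ i, Fintype (A i)] where
  P : S → (∀ i, A i) → S → ℝ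
  r : Fin n → ℕ → S → (∀ i, A i) → ℝ
  ν₀ : S → ℝ
  H : ℕ

variable {n : ℕ} {S : Type} {A : Fin n → Type} [Fintype S] [∀ i, Fintype (A i)]

/-- A non-stationary policy: a distribution over actions at each time and state. -/
def IsPol {B : Type} [Fintype B] (π : ℕ → S → B → ℝ) : Prop :=
  (∀ t s b, 0 ≤ π t s b) ∧ ∀ t s, ∑ b, π t s b = 1

/-- Validity of the game data: `ν₀` a distribution, `P` a kernel, rewards in `[-1,1]`. -/
def IsGame (G : Game n S A) : Prop :=
  (∀ s, 0 ≤ G.ν₀ s) ∧ (∑ s, G.ν₀ s = 1) ∧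
    (∀ s a, (∀ s', 0 ≤ G.P s a s') ∧ ∑ s', G.P s a s' = 1) ∧
    (∀ i t s a, |G.r i t s a| ≤ 1)

/-- Joint (product) non-stationary policy. -/
def joint (π : ∀ i, ℕ → S → A i → ℝ) : ℕ → S → (∀ i, A i) → ℝ :=
  fun t s a => ∏ i, π i t s (a i)

/-- `stateDist G π t s = P(s_t = s)` (the time-`t` state visitation, `μ^t_π`). -/
def stateDist (G : Game n S A) (π : ℕ → S → (∀ i, A i) → ℝ) : ℕ → S → ℝ
  | 0 => G.ν₀
  | t + 1 => fun s' => ∑ s : S, ∑ a : (∀ i, A i), stateDist G π t s * π t s a * G.P s a s'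

/-- Value-to-go with `k` remaining steps starting at time `t` in state `s`. -/
def Vaux (G : Game n S A) (i : Fin n) (π : ℕ → S → (∀ i, A i) → ℝ) :
    ℕ → ℕ → S → ℝ
  | 0, _, _ => 0
  | k + 1, t, s => ∑ a : (∀ i, A i), π t s a *
      (G.r i t s a + ∑ s' : S, G.P s a s' * Vaux G i π k (t + 1) s')

/-- `V_{i,t}^π(s)`: expected cumulative reward from time `t` to `H-1` given `s_t = s`. -/
def Vt (G : Game n S A) (i : Fin n) (π : ℕ → S → (∀ i, A i) → ℝ)
    (t : ℕ) (s : S) : ℝ :=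
  Vaux G i π (G.H - t) t s

/-- `V_i^π(ν₀)`. -/
def value (G : Game n S A) (i : Fin n) (π : ℕ → S → (∀ i, A i) → ℝ) : ℝ :=
  ∑ s : S, G.ν₀ s * Vt G i π 0 s

/-- `Q_{i,t}^π(s,a) = r_i^t(s,a) + ∑_{s'} P(s'|s,a) V_{i,t+1}^π(s')`. -/
def Qt (G : Game n S A) (i : Fin n) (π : ℕ → S → (∀ i, A i) → ℝ)
    (t : ℕ) (s : S) (a : ∀ i, A i) : ℝ :=
  G.r i t s a + ∑ s' : S, G.P s a s' * Vt G i π (t + 1) s'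

/-- Unilateral deviation of player `i` to `πi'`. -/
def dev (π : ∀ i, ℕ → S → A i → ℝ) (i : Fin n) (πi' : ℕ → S → A i → ℝ) :
    ∀ j, ℕ → S → A j → ℝ :=
  Function.update π i πi'

/-- Time-`t` behavioral cloning error of player `i`:
`E_{s ∼ μ^t_{π^E}} ‖π_{i,t}(·|s) − π^E_{i,t}(·|s)‖₁`. -/
def bcErrT (G : Game n S A) (πE π : ∀ i, ℕ → S → A i → ℝ)
    (i : Fin n) (t : ℕ) : ℝ :=
  ∑ s : S, stateDist G (joint πE) t s * ∑ b : A i, |π i t s b - πE i t s b|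

end FH

/-!
Split the gap as `(V_i(π*_i, π_{-i}) - V_i(π^E)) + (V_i(π^E) - V_i(π))`, where `π*_i` is a best
response to `π_{-i}`; one exists because backward induction produces a greedy deterministic one.
Both terms compare product policies with the expert under the expert's visitation, so the
simulation lemma `|V^p - V^q| ≤ H ∑_t E_{μ^t_q} ‖p_t - q_t‖₁` applies. The L1 distance between
product distributions is at most the sum of the per-player distances, so every step costs at most
`n ε_BC + δ(ε_BC)` in the first term and `n ε_BC` in the second.
-/

open Finset

lemma abs_sum_mul_le_sum_abs_mul {ι : Type*} (s : Finset ι) (w : ι → ℝ) {f g : ι → ℝ}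
    (h : ∀ i ∈ s, |f i| ≤ g i) : |∑ i ∈ s, w i * f i| ≤ ∑ i ∈ s, |w i| * g i :=
  (abs_sum_le_sum_abs _ _).trans <| sum_le_sum fun i hi => by
    rw [abs_mul]; exact mul_le_mul_of_nonneg_left (h i hi) (abs_nonneg _)

lemma abs_sum_mul_le_of_sum_eq_one {ι : Type*} [Fintype ι] {w f : ι → ℝ} {c : ℝ}
    (hw : ∀ i, 0 ≤ w i) (hw1 : ∑ i, w i = 1) (hf : ∀ i, |f i| ≤ c) :
    |∑ i, w i * f i| ≤ c := by
  calc |∑ i, w i * f i| ≤ ∑ i, |w i| * c := abs_sum_mul_le_sum_abs_mul _ w fun i _ => hf i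
    _ = c := by simp_rw [abs_of_nonneg (hw _), ← sum_mul, hw1, one_mul]

lemma sum_prod_eq_one {ι : Type*} [Fintype ι] [DecidableEq ι] {κ : ι → Type*}
    [∀ i, Fintype (κ i)] {f : ∀ i, κ i → ℝ} (hf : ∀ i, ∑ b, f i b = 1) :
    ∑ x : ∀ i, κ i, ∏ i, f i (x i) = 1 := by
  simp [← Fintype.prod_sum, hf]

lemma sum_abs_mul_sub_mul_le {α β : Type*} [Fintype α] [Fintype β] {p q : α → ℝ}
    {p' q' : β → ℝ} (hq : ∀ a, 0 ≤ q a) (hq1 : ∑ a, q a = 1) (hp' : ∀ b, 0 ≤ p' b)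
    (hp'1 : ∑ b, p' b = 1) :
    ∑ a, ∑ b, |p a * p' b - q a * q' b| ≤ ∑ a, |p a - q a| + ∑ b, |p' b - q' b| := by
  have hsplit : ∀ a b, |p a * p' b - q a * q' b| ≤ |p a - q a| * p' b + q a * |p' b - q' b| :=
    fun a b => by
      calc |p a * p' b - q a * q' b| = |(p a - q a) * p' b + q a * (p' b - q' b)| := by ring_nf
        _ ≤ |p a - q a| * p' b + q a * |p' b - q' b| := by
          refine (abs_add_le _ _).trans_eq ?_
          rw [abs_mul, abs_mul, abs_of_nonneg (hp' b), abs_of_nonneg (hq a)]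
  calc ∑ a, ∑ b, |p a * p' b - q a * q' b|
      ≤ ∑ a, ∑ b, (|p a - q a| * p' b + q a * |p' b - q' b|) :=
        sum_le_sum fun a _ => sum_le_sum fun b _ => hsplit a b
    _ = ∑ a, |p a - q a| + ∑ b, |p' b - q' b| := by
        simp only [sum_add_distrib, ← mul_sum, ← sum_mul, hp'1, hq1, mul_one, one_mul]

lemma sum_abs_prod_sub_prod_le {n : ℕ} {A : Fin n → Type*} [∀ i, Fintype (A i)]
    {v w : ∀ i, A i → ℝ} (hv : ∀ i b, 0 ≤ v i b) (hv1 : ∀ i, ∑ b, v i b = 1)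
    (hw : ∀ i b, 0 ≤ w i b) (hw1 : ∀ i, ∑ b, w i b = 1) :
    ∑ x : ∀ i, A i, |∏ i, v i (x i) - ∏ i, w i (x i)| ≤ ∑ i, ∑ b, |v i b - w i b| := by
  induction n with
  | zero => simp
  | succ n ih =>
    rw [← (Fin.consEquiv A).sum_comp, Fintype.sum_prod_type, Fin.sum_univ_succ]
    simp only [Fin.consEquiv_apply, Fin.prod_univ_succ, Fin.cons_zero, Fin.cons_succ]
    refine (sum_abs_mul_sub_mul_le (hw 0) (hw1 0)
      (fun x => prod_nonneg fun i _ => hv i.succ (x i)) (sum_prod_eq_one fun i => hv1 i.succ)).trans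
      (add_le_add le_rfl ?_)
    exact ih (fun i => hv _) (fun i => hv1 _) (fun i => hw _) fun i => hw1 _

namespace FH

lemma IsPol.nonempty {S B : Type} [Fintype B] [Nonempty S] {π : ℕ → S → B → ℝ} (hπ : IsPol π) :
    Nonempty B := by
  by_contra h
  simpa [not_nonempty_iff.mp h] using hπ.2 0 (Classical.arbitrary S)

section

variable {n : ℕ} {S : Type} {A : Fin n → Type}

lemma joint_dev_apply (π : ∀ j, ℕ → S → A j → ℝ) (i : Fin n) (q : ℕ → S → A i → ℝ) (t : ℕ)
    (s : S) (a : ∀ j, A j) :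
    joint (dev π i q) t s a = q t s (a i) * ∏ j ∈ univ.erase i, π j t s (a j) := by
  rw [joint, ← mul_prod_erase _ _ (mem_univ i)]
  congr 1
  · simp [dev]
  · exact prod_congr rfl fun j hj => by simp [dev, ne_of_mem_erase hj]

variable [∀ i, Fintype (A i)]

lemma isPol_joint {π : ∀ i, ℕ → S → A i → ℝ} (hπ : ∀ i, IsPol (π i)) : IsPol (joint π) :=
  ⟨fun t s a => prod_nonneg fun i _ => (hπ i).1 t s (a i),
    fun t s => sum_prod_eq_one fun i => (hπ i).2 t s⟩

lemma isPol_dev {π : ∀ i, ℕ → S → A i → ℝ} (hπ : ∀ i, IsPol (π i)) (i : Fin n)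
    {q : ℕ → S → A i → ℝ} (hq : IsPol q) (j : Fin n) : IsPol (dev π i q j) := by
  rcases eq_or_ne j i with rfl | hji
  · simpa [dev] using hq
  · simpa [dev, hji] using hπ j

variable [Fintype S]

namespace IsGame

variable {G : Game n S A}

lemma ν₀_nonneg (hG : IsGame G) (s : S) : 0 ≤ G.ν₀ s := hG.1 s

lemma P_nonneg (hG : IsGame G) (s : S) (a : ∀ i, A i) (s' : S) : 0 ≤ G.P s a s' :=
  (hG.2.2.1 s a).1 s'

lemma sum_P (hG : IsGame G) (s : S) (a : ∀ i, A i) : ∑ s', G.P s a s' = 1 := (hG.2.2.1 s a).2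

lemma abs_r_le (hG : IsGame G) (i : Fin n) (t : ℕ) (s : S) (a : ∀ i, A i) : |G.r i t s a| ≤ 1 :=
  hG.2.2.2 i t s a

lemma nonempty (hG : IsGame G) : Nonempty S := by
  by_contra h
  simpa [not_nonempty_iff.mp h] using hG.2.1

end IsGame

variable {G : Game n S A}

lemma stateDist_nonneg (hG : IsGame G) {q : ℕ → S → (∀ i, A i) → ℝ} (hq : IsPol q) (t : ℕ)
    (s : S) : 0 ≤ stateDist G q t s := by
  induction t generalizing s with
  | zero => exact hG.ν₀_nonneg s
  | succ t ih =>
    exact sum_nonneg fun s _ => sum_nonneg fun a _ =>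
      mul_nonneg (mul_nonneg (ih s) (hq.1 t s a)) (hG.P_nonneg s a _)

lemma sum_stateDist_succ_mul (q : ℕ → S → (∀ i, A i) → ℝ) (t : ℕ) (f : S → ℝ) :
    ∑ s', stateDist G q (t + 1) s' * f s' =
      ∑ s, stateDist G q t s * ∑ a, q t s a * ∑ s', G.P s a s' * f s' := by
  simp only [stateDist, sum_mul, mul_sum, mul_assoc]
  rw [sum_comm]
  refine sum_congr rfl fun s _ => ?_
  rw [sum_comm]

lemma abs_reward_add_sum_le (hG : IsGame G) (i : Fin n) (t : ℕ) (s : S) (a : ∀ i, A i)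
    {V : S → ℝ} {c : ℝ} (hV : ∀ s', |V s'| ≤ c) :
    |G.r i t s a + ∑ s', G.P s a s' * V s'| ≤ c + 1 := by
  have := abs_sum_mul_le_of_sum_eq_one (hG.P_nonneg s a) (hG.sum_P s a) hV
  linarith [abs_add_le (G.r i t s a) (∑ s', G.P s a s' * V s'), hG.abs_r_le i t s a]

lemma abs_Vaux_le (hG : IsGame G) (i : Fin n) {p : ℕ → S → (∀ i, A i) → ℝ} (hp : IsPol p)
    (k t : ℕ) (s : S) : |Vaux G i p k t s| ≤ k := by
  induction k generalizing t s with
  | zero => simp [Vaux]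
  | succ k ih =>
    push_cast
    exact abs_sum_mul_le_of_sum_eq_one (hp.1 t s) (hp.2 t s) fun a =>
      abs_reward_add_sum_le hG i t s a (ih (t + 1))

/-- `E_{s ∼ μ^t_q} ‖p_t(·|s) − q_t(·|s)‖₁`. -/
def expectedL1 (G : Game n S A) (p q : ℕ → S → (∀ i, A i) → ℝ) (t : ℕ) : ℝ :=
  ∑ s, stateDist G q t s * ∑ a, |p t s a - q t s a|

lemma expectedL1_nonneg (hG : IsGame G) (p : ℕ → S → (∀ i, A i) → ℝ)
    {q : ℕ → S → (∀ i, A i) → ℝ} (hq : IsPol q) (t : ℕ) : 0 ≤ expectedL1 G p q t :=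
  sum_nonneg fun s _ =>
    mul_nonneg (stateDist_nonneg hG hq t s) (sum_nonneg fun _ _ => abs_nonneg _)

lemma sum_stateDist_mul_Vaux_succ_sub (i : Fin n) (p q : ℕ → S → (∀ i, A i) → ℝ) (k t : ℕ) :
    ∑ s, stateDist G q t s * (Vaux G i p (k + 1) t s - Vaux G i q (k + 1) t s) =
      ∑ s, stateDist G q t s * ∑ a, (p t s a - q t s a) *
          (G.r i t s a + ∑ s', G.P s a s' * Vaux G i p k (t + 1) s') +
        ∑ s', stateDist G q (t + 1) s' * (Vaux G i p k (t + 1) s' - Vaux G i q k (t + 1) s') := by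
  rw [sum_stateDist_succ_mul, ← sum_add_distrib]
  refine sum_congr rfl fun s _ => ?_
  simp only [Vaux, ← mul_add, ← sum_add_distrib, ← sum_sub_distrib]
  congr 1
  refine sum_congr rfl fun a _ => ?_
  simp only [mul_sub, sum_sub_distrib]
  ring

/-- Performance difference lemma, in the form of a simulation bound along `q`'s visitation. -/
lemma abs_sum_stateDist_mul_Vaux_sub_le (hG : IsGame G) (i : Fin n)
    {p q : ℕ → S → (∀ i, A i) → ℝ} (hp : IsPol p) (hq : IsPol q) (k t : ℕ) :
    |∑ s, stateDist G q t s * (Vaux G i p k t s - Vaux G i q k t s)| ≤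
      k * ∑ u ∈ range k, expectedL1 G p q (t + u) := by
  induction k generalizing t with
  | zero => simp [Vaux]
  | succ k ih =>
    have h_step : |∑ s, stateDist G q t s * ∑ a, (p t s a - q t s a) *
        (G.r i t s a + ∑ s', G.P s a s' * Vaux G i p k (t + 1) s')| ≤
          (k + 1) * expectedL1 G p q t := by
      refine (abs_sum_mul_le_sum_abs_mul _ _ fun s _ => abs_sum_mul_le_sum_abs_mul _ _ fun a _ =>
        abs_reward_add_sum_le hG i t s a (abs_Vaux_le hG i hp k (t + 1))).trans_eq ?_
      simp only [expectedL1, mul_sum, abs_of_nonneg (stateDist_nonneg hG hq t _)]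
      exact sum_congr rfl fun s _ => sum_congr rfl fun a _ => by ring
    have h_tail : (0 : ℝ) ≤ ∑ u ∈ range k, expectedL1 G p q (t + 1 + u) :=
      sum_nonneg fun u _ => expectedL1_nonneg hG p hq _
    rw [sum_stateDist_mul_Vaux_succ_sub, sum_range_succ', add_zero]
    simp only [← add_assoc, add_right_comm t _ 1]
    refine (abs_add_le _ _).trans ((add_le_add h_step (ih (t + 1))).trans ?_)
    push_cast
    nlinarith

lemma abs_value_sub_le (hG : IsGame G) (i : Fin n) {p q : ℕ → S → (∀ i, A i) → ℝ}
    (hp : IsPol p) (hq : IsPol q) :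
    |value G i p - value G i q| ≤ G.H * ∑ t ∈ range G.H, expectedL1 G p q t := by
  simpa [value, Vt, ← sum_sub_distrib, ← mul_sub, stateDist] using
    abs_sum_stateDist_mul_Vaux_sub_le hG i hp hq G.H 0

lemma expectedL1_joint_le (hG : IsGame G) {μ ν : ∀ i, ℕ → S → A i → ℝ}
    (hμ : ∀ i, IsPol (μ i)) (hν : ∀ i, IsPol (ν i)) (t : ℕ) :
    expectedL1 G (joint μ) (joint ν) t ≤ ∑ j, bcErrT G ν μ j t := by
  simp only [expectedL1, bcErrT]
  rw [sum_comm]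
  refine sum_le_sum fun s _ => ?_
  rw [← mul_sum]
  exact mul_le_mul_of_nonneg_left (sum_abs_prod_sub_prod_le (fun j => (hμ j).1 t s)
    (fun j => (hμ j).2 t s) (fun j => (hν j).1 t s) (fun j => (hν j).2 t s))
    (stateDist_nonneg hG (isPol_joint hν) t s)

lemma abs_value_joint_sub_le (hG : IsGame G) (i : Fin n) {μ ν : ∀ i, ℕ → S → A i → ℝ}
    (hμ : ∀ i, IsPol (μ i)) (hν : ∀ i, IsPol (ν i)) {c : ℝ}
    (hc : ∀ t < G.H, ∑ j, bcErrT G ν μ j t ≤ c) :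
    |value G i (joint μ) - value G i (joint ν)| ≤ c * G.H ^ 2 := by
  have h_sum : ∑ t ∈ range G.H, expectedL1 G (joint μ) (joint ν) t ≤ G.H * c := by
    simpa using sum_le_card_nsmul _ _ c fun t ht =>
      (expectedL1_joint_le hG hμ hν t).trans (hc t (mem_range.mp ht))
  calc |value G i (joint μ) - value G i (joint ν)|
      ≤ G.H * ∑ t ∈ range G.H, expectedL1 G (joint μ) (joint ν) t :=
        abs_value_sub_le hG i (isPol_joint hμ) (isPol_joint hν)
    _ ≤ G.H * (G.H * c) := mul_le_mul_of_nonneg_left h_sum (Nat.cast_nonneg _)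
    _ = c * G.H ^ 2 := by ring

lemma bcErrT_nonneg (hG : IsGame G) {πE : ∀ i, ℕ → S → A i → ℝ} (hE : ∀ i, IsPol (πE i))
    (π : ∀ i, ℕ → S → A i → ℝ) (i : Fin n) (t : ℕ) : 0 ≤ bcErrT G πE π i t :=
  sum_nonneg fun s _ => mul_nonneg (stateDist_nonneg hG (isPol_joint hE) t s)
    (sum_nonneg fun _ _ => abs_nonneg _)

lemma sum_bcErrT_dev_le (hG : IsGame G) {πE : ∀ i, ℕ → S → A i → ℝ} (hE : ∀ i, IsPol (πE i))
    (π : ∀ i, ℕ → S → A i → ℝ) (i : Fin n) (q : ℕ → S → A i → ℝ) (t : ℕ) :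
    ∑ j, bcErrT G πE (dev π i q) j t ≤
      ∑ j, bcErrT G πE π j t + ∑ s, stateDist G (joint πE) t s * ∑ b, |q t s b - πE i t s b| := by
  rw [← add_sum_erase _ _ (mem_univ i), ← add_sum_erase _ _ (mem_univ i)]
  have h_others : ∀ j ∈ univ.erase i, bcErrT G πE (dev π i q) j t = bcErrT G πE π j t :=
    fun j hj => by simp only [bcErrT, dev, Function.update_of_ne (ne_of_mem_erase hj)]
  simp only [sum_congr rfl h_others]
  have h_self : bcErrT G πE (dev π i q) i t =
      ∑ s, stateDist G (joint πE) t s * ∑ b, |q t s b - πE i t s b| := by simp [bcErrT, dev]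
  linarith [bcErrT_nonneg hG hE π i t]

open Classical in
/-- `Q_{i,t}(s, b)` of a unilateral deviation of player `i` against `π`, for a continuation value
`V` at time `t + 1`. -/
noncomputable def devQ (G : Game n S A) (i : Fin n) (π : ∀ j, ℕ → S → A j → ℝ) (V : S → ℝ)
    (t : ℕ) (s : S) (b : A i) : ℝ :=
  ∑ a : ∀ j, A j, (if a i = b then ∏ j ∈ univ.erase i, π j t s (a j) else 0) *
    (G.r i t s a + ∑ s', G.P s a s' * V s')

lemma Vaux_dev_succ (i : Fin n) (π : ∀ j, ℕ → S → A j → ℝ) (q : ℕ → S → A i → ℝ) (k t : ℕ)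
    (s : S) :
    Vaux G i (joint (dev π i q)) (k + 1) t s =
      ∑ b, q t s b * devQ G i π (Vaux G i (joint (dev π i q)) k (t + 1)) t s b := by
  classical
  simp only [devQ, mul_sum]
  rw [Vaux, sum_comm]
  refine sum_congr rfl fun a _ => ?_
  simp [joint_dev_apply, mul_assoc]

lemma devQ_mono (hG : IsGame G) (i : Fin n) {π : ∀ j, ℕ → S → A j → ℝ} (hπ : ∀ j, IsPol (π j))
    {V V' : S → ℝ} (hV : ∀ s, V s ≤ V' s) (t : ℕ) (s : S) (b : A i) :
    devQ G i π V t s b ≤ devQ G i π V' t s b := by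
  refine sum_le_sum fun a _ => mul_le_mul_of_nonneg_left ?_ ?_
  · exact add_le_add_right (sum_le_sum fun s' _ =>
      mul_le_mul_of_nonneg_left (hV s') (hG.P_nonneg s a s')) _
  · split_ifs
    exacts [prod_nonneg fun j _ => (hπ j).1 t s (a j), le_rfl]

noncomputable def optVaux (G : Game n S A) (i : Fin n) (π : ∀ j, ℕ → S → A j → ℝ) :
    ℕ → ℕ → S → ℝ
  | 0, _, _ => 0
  | k + 1, t, s => ⨆ b, devQ G i π (optVaux G i π k (t + 1)) t s b

lemma Vaux_dev_le_optVaux (hG : IsGame G) (i : Fin n) {π : ∀ j, ℕ → S → A j → ℝ}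
    (hπ : ∀ j, IsPol (π j)) {q : ℕ → S → A i → ℝ} (hq : IsPol q) (k t : ℕ) (s : S) :
    Vaux G i (joint (dev π i q)) k t s ≤ optVaux G i π k t s := by
  induction k generalizing t s with
  | zero => simp [Vaux, optVaux]
  | succ k ih =>
    rw [Vaux_dev_succ, optVaux]
    calc ∑ b, q t s b * devQ G i π (Vaux G i (joint (dev π i q)) k (t + 1)) t s b
        ≤ ∑ b, q t s b * ⨆ b', devQ G i π (optVaux G i π k (t + 1)) t s b' :=
          sum_le_sum fun b _ => mul_le_mul_of_nonneg_left
            ((devQ_mono hG i hπ (ih (t + 1)) t s b).trans (le_ciSup (Finite.bddAbove_range _) b))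
            (hq.1 t s b)
      _ = ⨆ b', devQ G i π (optVaux G i π k (t + 1)) t s b' := by rw [← sum_mul, hq.2, one_mul]

variable [∀ i, Nonempty (A i)]

/-- A maximiser of `devQ` for the `G.H - t` steps left in the game at time `t`. -/
noncomputable def greedyAct (G : Game n S A) (i : Fin n) (π : ∀ j, ℕ → S → A j → ℝ) (t : ℕ)
    (s : S) : A i :=
  (exists_eq_ciSup_of_finite (f := devQ G i π (optVaux G i π (G.H - t - 1) (t + 1)) t s)).choose

lemma greedyAct_spec (i : Fin n) (π : ∀ j, ℕ → S → A j → ℝ) (t : ℕ) (s : S) :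
    devQ G i π (optVaux G i π (G.H - t - 1) (t + 1)) t s (greedyAct G i π t s) =
      ⨆ b, devQ G i π (optVaux G i π (G.H - t - 1) (t + 1)) t s b :=
  exists_eq_ciSup_of_finite.choose_spec

open Classical in
noncomputable def greedyPol (G : Game n S A) (i : Fin n) (π : ∀ j, ℕ → S → A j → ℝ) :
    ℕ → S → A i → ℝ :=
  fun t s b => if b = greedyAct G i π t s then 1 else 0

lemma isPol_greedyPol (i : Fin n) (π : ∀ j, ℕ → S → A j → ℝ) : IsPol (greedyPol G i π) :=
  ⟨fun t s b => by unfold greedyPol; split_ifs <;> norm_num,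
    fun t s => by classical simp [greedyPol]⟩

lemma Vaux_dev_greedyPol (i : Fin n) (π : ∀ j, ℕ → S → A j → ℝ) (k t : ℕ) (hkt : k + t = G.H)
    (s : S) : Vaux G i (joint (dev π i (greedyPol G i π))) k t s = optVaux G i π k t s := by
  induction k generalizing t s with
  | zero => simp [Vaux, optVaux]
  | succ k ih =>
    classical
    have hk : G.H - t - 1 = k := by omega
    rw [Vaux_dev_succ, optVaux, funext (ih (t + 1) (by omega))]
    simp only [greedyPol, ite_mul, one_mul, zero_mul, sum_ite_eq', mem_univ, if_true]
    rw [← hk]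
    exact greedyAct_spec i π t s

lemma exists_bestResponse (hG : IsGame G) (i : Fin n) {π : ∀ j, ℕ → S → A j → ℝ}
    (hπ : ∀ j, IsPol (π j)) :
    ∃ q, IsPol q ∧
      ∀ q', IsPol q' → value G i (joint (dev π i q')) ≤ value G i (joint (dev π i q)) := by
  refine ⟨greedyPol G i π, isPol_greedyPol i π, fun q' hq' => ?_⟩
  refine sum_le_sum fun s _ => mul_le_mul_of_nonneg_left ?_ (hG.ν₀_nonneg s)
  simp only [Vt, Nat.sub_zero]
  rw [Vaux_dev_greedyPol i π _ 0 (by omega)]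
  exact Vaux_dev_le_optVaux hG i hπ hq' _ 0 s

end

theorem delta_nash_gap_finite_general {n : ℕ} {S : Type} {A : Fin n → Type}
    [Fintype S] [∀ i, Fintype (A i)]
    (G : Game n S A) (hG : IsGame G)
    (δ : ℝ → ℝ)
    (πE π : ∀ i, ℕ → S → A i → ℝ)
    (hE : ∀ i, IsPol (πE i)) (hπ : ∀ i, IsPol (π i))
    (εBC : ℝ) (hBC : ∀ (i : Fin n), ∀ t < G.H, bcErrT G πE π i t ≤ εBC)
    (hBR : ∀ (i : Fin n) (πiStar : ℕ → S → A i → ℝ), IsPol πiStar →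
      (∀ (πi'' : ℕ → S → A i → ℝ), IsPol πi'' →
        value G i (joint (dev π i πi'')) ≤ value G i (joint (dev π i πiStar))) →
      ∀ t < G.H,
        ∑ s : S, stateDist G (joint πE) t s *
          ∑ b : A i, |πiStar t s b - πE i t s b| ≤ δ εBC) :
    ∀ (i : Fin n) (πi' : ℕ → S → A i → ℝ), IsPol πi' →
      value G i (joint (dev π i πi')) - value G i (joint π) ≤
        (2 * n * εBC + δ εBC) * (G.H : ℝ) ^ 2 := by
  intro i πi' hπi'
  have : Nonempty S := hG.nonempty
  have : ∀ j, Nonempty (A j) := fun j => (hπ j).nonempty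
  obtain ⟨q, hq, hq_best⟩ := exists_bestResponse hG i hπ
  have hπ_err : ∀ t < G.H, ∑ j, bcErrT G πE π j t ≤ n * εBC := fun t ht => by
    simpa using sum_le_card_nsmul univ _ εBC fun j _ => hBC j t ht
  have h_dev := abs_value_joint_sub_le hG i (isPol_dev hπ i hq) hE fun t ht =>
    (sum_bcErrT_dev_le hG hE π i q t).trans (add_le_add (hπ_err t ht) (hBR i q hq hq_best t ht))
  have h_π := abs_value_joint_sub_le hG i hπ hE hπ_err
  have h_dominated := hq_best πi' hπi'
  rw [abs_le] at h_dev h_π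
  linarith

/-- finite-horizon δ-continuity bound: if `π` has time-uniform BC
error `ε_BC` and every best response `π*_i` to `π_{-i}` stays within expected L1
distance `δ(ε_BC)` of `π^E_i` under the expert visitation at every time step,
then `NashGap(π) ≤ (2 n ε_BC + δ(ε_BC)) H²`. -/
theorem delta_nash_gap_finite {n : ℕ} {S : Type} {A : Fin n → Type}
    [Fintype S] [∀ i, Fintype (A i)]
    (G : Game n S A) (hG : IsGame G)
    (δ : ℝ → ℝ) (hδ : ∀ ε > (0:ℝ), 0 ≤ δ ε ∧ δ ε ≤ 2)
    (πE π : ∀ i, ℕ → S → A i → ℝ)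
    (hE : ∀ i, IsPol (πE i)) (hπ : ∀ i, IsPol (π i))
    (εBC : ℝ) (hBC : ∀ (i : Fin n), ∀ t < G.H, bcErrT G πE π i t ≤ εBC)
    (hBR : ∀ (i : Fin n) (πiStar : ℕ → S → A i → ℝ), IsPol πiStar →
      (∀ (πi'' : ℕ → S → A i → ℝ), IsPol πi'' →
        value G i (joint (dev π i πi'')) ≤ value G i (joint (dev π i πiStar))) →
      ∀ t < G.H,
        ∑ s : S, stateDist G (joint πE) t s *
          ∑ b : A i, |πiStar t s b - πE i t s b| ≤ δ εBC) :
    ∀ (i : Fin n) (πi' : ℕ → S → A i → ℝ), IsPol πi' →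
      value G i (joint (dev π i πi')) - value G i (joint π) ≤
        (2 * n * εBC + δ εBC) * (G.H : ℝ) ^ 2 :=
  delta_nash_gap_finite_general G hG δ πE π hE hπ εBC hBC hBR

end FH
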